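/- arXiv:1807.10956 — 3 statements merged into one kernel-verified Lean document; each statement's English description precedes it below -/
import Mathlib

section
/- Given a vector z ∈ ℝ^p partitioned into L disjoint groups z^{(1)},…,z^{(L)}, and an integer k with 1 ≤ k ≤ L, a solution of: minimize −zᵀu subject to ‖u‖₂ ≤ 1 and at most k groups of u are nonzero, is u* = P(z)/‖P(z)‖₂, where P(z) keeps the entries of z in the k groups with largest Euclidean group norms ‖z^{(g)}‖₂ and sets all other entries to zero (assuming P(z) ≠ 0). -/
attribute [local instance] Classical.propDecidable

/-- If `|X| ≤ |Y|` and every value on `X` is below every value on `Y`,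
then the sum over `X` is at most the sum over `Y` (values nonnegative). -/
lemma aux_sum_le {α : Type*} [DecidableEq α] (A : α → ℝ) (hA : ∀ x, 0 ≤ A x)
    (X Y : Finset α) (hcard : X.card ≤ Y.card)
    (hle : ∀ x ∈ X, ∀ y ∈ Y, A x ≤ A y) :
    ∑ x ∈ X, A x ≤ ∑ y ∈ Y, A y := by
  rcases X.eq_empty_or_nonempty with h | h
  · simp only [h, Finset.sum_empty]
    exact Finset.sum_nonneg fun y _ => hA y
  · have hY : Y.Nonempty := Finset.card_pos.mp (lt_of_lt_of_le (Finset.card_pos.mpr h) hcard)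
    obtain ⟨y0, hy0, hmin⟩ := Y.exists_min_image A hY
    calc ∑ x ∈ X, A x ≤ ∑ _x ∈ X, A y0 := Finset.sum_le_sum fun x hx => hle x hx y0 hy0
    _ = (X.card : ℝ) * A y0 := by simp [Finset.sum_const, nsmul_eq_mul]
    _ ≤ (Y.card : ℝ) * A y0 :=
        mul_le_mul_of_nonneg_right (by exact_mod_cast hcard) (hA y0)
    _ = ∑ _y ∈ Y, A y0 := by simp [Finset.sum_const, nsmul_eq_mul]
    _ ≤ ∑ y ∈ Y, A y := Finset.sum_le_sum fun y hy => hmin y hy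

/-- Sum over two finsets of the same cardinality, where off-`S` values are
dominated by on-`S` values. -/
lemma aux_sum_top {α : Type*} [DecidableEq α] (A : α → ℝ) (hA : ∀ x, 0 ≤ A x)
    (T S : Finset α) (hcard : T.card ≤ S.card)
    (hle : ∀ x ∉ S, ∀ y ∈ S, A x ≤ A y) :
    ∑ x ∈ T, A x ≤ ∑ y ∈ S, A y := by
  rw [← Finset.sum_inter_add_sum_sdiff T S A, ← Finset.sum_inter_add_sum_sdiff S T A]
  have h1 : T ∩ S = S ∩ T := Finset.inter_comm T S
  rw [h1]
  have hc : (T \ S).card ≤ (S \ T).card := by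
    have h2 := Finset.card_sdiff_add_card_inter T S
    have h3 := Finset.card_sdiff_add_card_inter S T
    have h4 : (T ∩ S).card = (S ∩ T).card := by rw [h1]
    omega
  have := aux_sum_le A hA (T \ S) (S \ T) hc
    (fun x hx y hy => hle x (Finset.mem_sdiff.mp hx).2 y (Finset.mem_sdiff.mp hy).1)
  linarith

/-- Group-`L0` sparse projection: the normalized hard-thresholding to the top-`k`
groups solves `min −zᵀu  s.t. ‖u‖₂ ≤ 1` and at most `k` nonzero groups. -/
theorem groupL0_projection (p L k : ℕ) (G : Fin L → Finset (Fin p))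
    (hdisj : ∀ g h : Fin L, g ≠ h → Disjoint (G g) (G h))
    (hcover : ∀ i : Fin p, ∃ g, i ∈ G g)
    (hk1 : 1 ≤ k) (hkL : k ≤ L)
    (z : Fin p → ℝ)
    (S : Finset (Fin L)) (hScard : S.card = k)
    (hStop : ∀ g ∈ S, ∀ h ∉ S,
      Real.sqrt (∑ i ∈ G h, (z i) ^ 2) ≤ Real.sqrt (∑ i ∈ G g, (z i) ^ 2)) :
    let P : Fin p → ℝ := fun i => if ∃ g ∈ S, i ∈ G g then z i else 0
    let ustar : Fin p → ℝ := fun i => P i / Real.sqrt (∑ j, (P j) ^ 2)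
    (∃ j, P j ≠ 0) →
    ∀ u : Fin p → ℝ, (∑ i, (u i) ^ 2) ≤ 1 →
      ((Finset.univ.filter (fun g : Fin L => ∃ i ∈ G g, u i ≠ 0)).card ≤ k) →
      -(∑ i, z i * ustar i) ≤ -(∑ i, z i * u i) := by
  intro P ustar hP u hu hcardu
  -- partition lemma
  have hpart : ∀ (f : Fin p → ℝ) (B : Finset (Fin L)),
      (∀ i : Fin p, (∀ g ∈ B, i ∉ G g) → f i = 0) →
      ∑ i, f i = ∑ g ∈ B, ∑ i ∈ G g, f i := by
    intro f B h0
    rw [← Finset.sum_biUnion (fun g _ h _ hgh => hdisj g h hgh)]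
    refine (Finset.sum_subset (Finset.subset_univ _) ?_).symm
    intro i _ hi
    exact h0 i (fun g hg hig => hi (Finset.mem_biUnion.mpr ⟨g, hg, hig⟩))
  set A : Fin L → ℝ := fun g => ∑ i ∈ G g, (z i) ^ 2 with hA
  have hA0 : ∀ g, 0 ≤ A g := fun g => Finset.sum_nonneg fun i _ => sq_nonneg _
  -- ∑ P² = ∑_{g∈S} A g
  have hsumP : ∑ j, (P j) ^ 2 = ∑ g ∈ S, A g := by
    rw [hpart (fun j => (P j) ^ 2) S (fun i hi => by
      simp only [P]
      rw [if_neg]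
      · ring
      · rintro ⟨g, hg, hig⟩; exact hi g hg hig)]
    refine Finset.sum_congr rfl fun g hg => Finset.sum_congr rfl fun i hi => ?_
    simp only [P]
    rw [if_pos ⟨g, hg, hi⟩]
  have hPpos : 0 < ∑ j, (P j) ^ 2 := by
    obtain ⟨j, hj⟩ := hP
    exact Finset.sum_pos' (fun i _ => sq_nonneg _) ⟨j, Finset.mem_univ j, by positivity⟩
  set N := Real.sqrt (∑ j, (P j) ^ 2) with hN
  have hNpos : 0 < N := Real.sqrt_pos.mpr hPpos
  -- value at ustar
  have hval : ∑ i, z i * ustar i = N := by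
    have hzP : ∀ i, z i * P i = (P i) ^ 2 := by
      intro i
      simp only [P]
      split_ifs
      · ring
      · ring
    calc ∑ i, z i * ustar i = ∑ i, z i * P i / N := by
          refine Finset.sum_congr rfl fun i _ => ?_
          simp only [ustar]
          ring
    _ = (∑ i, (P i) ^ 2) / N := by
          rw [← Finset.sum_div]
          congr 1
          exact Finset.sum_congr rfl fun i _ => hzP i
    _ = N := Real.div_sqrt
  rw [hval, neg_le_neg_iff]
  -- main estimate: ∑ z·u ≤ N
  set T := Finset.univ.filter (fun g : Fin L => ∃ i ∈ G g, u i ≠ 0) with hT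
  set B : Fin L → ℝ := fun g => ∑ i ∈ G g, (u i) ^ 2 with hB
  have hB0 : ∀ g, 0 ≤ B g := fun g => Finset.sum_nonneg fun i _ => sq_nonneg _
  have hzu : ∑ i, z i * u i = ∑ g ∈ T, ∑ i ∈ G g, z i * u i := by
    refine hpart _ T fun i hi => ?_
    obtain ⟨g, hg⟩ := hcover i
    by_cases hui : u i = 0
    · rw [hui]; ring
    · exact absurd hg (hi g (Finset.mem_filter.mpr ⟨Finset.mem_univ g, ⟨i, hg, hui⟩⟩))
  have step1 : ∑ g ∈ T, ∑ i ∈ G g, z i * u i ≤ ∑ g ∈ T, Real.sqrt (A g) * Real.sqrt (B g) :=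
    Finset.sum_le_sum fun g _ => Real.sum_mul_le_sqrt_mul_sqrt (G g) z u
  have step2 : ∑ g ∈ T, Real.sqrt (A g) * Real.sqrt (B g) ≤
      Real.sqrt (∑ g ∈ T, A g) * Real.sqrt (∑ g ∈ T, B g) :=
    Real.sum_sqrt_mul_sqrt_le T hA0 hB0
  have hTA : ∑ g ∈ T, A g ≤ ∑ g ∈ S, A g := by
    refine aux_sum_top A hA0 T S (by rw [hScard]; exact hcardu) ?_
    intro x hx y hy
    have h1 := hStop y hy x hx
    calc A x = Real.sqrt (A x) ^ 2 := (Real.sq_sqrt (hA0 x)).symm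
    _ ≤ Real.sqrt (A y) ^ 2 := by
        have := Real.sqrt_nonneg (A x)
        nlinarith
    _ = A y := Real.sq_sqrt (hA0 y)
  have hTB : ∑ g ∈ T, B g ≤ 1 := by
    have h1 : ∑ g ∈ T, B g = ∑ i ∈ T.biUnion G, (u i) ^ 2 :=
      (Finset.sum_biUnion (fun g _ h _ hgh => hdisj g h hgh)).symm
    rw [h1]
    refine le_trans (Finset.sum_le_sum_of_subset_of_nonneg (Finset.subset_univ _)
      (fun i _ _ => sq_nonneg _)) hu
  calc ∑ i, z i * u i ≤ Real.sqrt (∑ g ∈ T, A g) * Real.sqrt (∑ g ∈ T, B g) := by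
        rw [hzu]; exact le_trans step1 step2
  _ ≤ Real.sqrt (∑ g ∈ S, A g) * 1 := by
      refine mul_le_mul (Real.sqrt_le_sqrt hTA) ?_ (Real.sqrt_nonneg _) (Real.sqrt_nonneg _)
      rw [show (1 : ℝ) = Real.sqrt 1 by simp]
      exact Real.sqrt_le_sqrt hTB
  _ = N := by rw [mul_one, hN, hsumP]
end

section
/- The optimal value of the group-sparse projection problem min_{‖u‖₂ ≤ 1, at most k nonzero groups} (−zᵀu) equals −√(Σ_{g ∈ S} ‖z^{(g)}‖₂²), where S is a set of k groups with the largest group norms ‖z^{(g)}‖₂. -/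
attribute [local instance] Classical.propDecidable

/-- The optimal value of the group-sparse projection problem equals
`−√(Σ_{g∈S} ‖z^{(g)}‖₂²)` where `S` is a set of `k` groups with largest group norms. -/
theorem groupL0_projection_value (p L k : ℕ) (G : Fin L → Finset (Fin p))
    (hdisj : ∀ g h : Fin L, g ≠ h → Disjoint (G g) (G h))
    (hcover : ∀ i : Fin p, ∃ g, i ∈ G g)
    (hk1 : 1 ≤ k) (hkL : k ≤ L)
    (z : Fin p → ℝ)
    (S : Finset (Fin L)) (hScard : S.card = k)
    (hSmax : ∀ S' : Finset (Fin L), S'.card = k →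
      (∑ g ∈ S', ∑ i ∈ G g, (z i) ^ 2) ≤ ∑ g ∈ S, ∑ i ∈ G g, (z i) ^ 2) :
    IsLeast
      { y : ℝ | ∃ u : Fin p → ℝ, (∑ i, (u i) ^ 2) ≤ 1 ∧
          ((Finset.univ.filter (fun g : Fin L => ∃ i ∈ G g, u i ≠ 0)).card ≤ k) ∧
          y = -(∑ i, z i * u i) }
      (-(Real.sqrt (∑ g ∈ S, ∑ i ∈ G g, (z i) ^ 2))) := by
  classical
  set Tsq := ∑ g ∈ S, ∑ i ∈ G g, (z i) ^ 2 with hTsqdef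
  have hTsqnn : 0 ≤ Tsq :=
    Finset.sum_nonneg fun g _ => Finset.sum_nonneg fun i _ => sq_nonneg _
  set T := Real.sqrt Tsq with hTdef
  have hTnn : 0 ≤ T := Real.sqrt_nonneg _
  have hpd : ∀ s : Finset (Fin L), (↑s : Set (Fin L)).PairwiseDisjoint G :=
    fun s g _ h _ hgh => hdisj g h hgh
  have hsumA : ∀ (s : Finset (Fin L)) (f : Fin p → ℝ),
      ∑ i ∈ s.biUnion G, f i = ∑ g ∈ s, ∑ i ∈ G g, f i :=
    fun s f => Finset.sum_biUnion (hpd s)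
  constructor
  · -- membership
    by_cases h0 : Tsq = 0
    · refine ⟨0, by simp, by simp, ?_⟩
      simp [hTdef, h0]
    · have hTsqpos : 0 < Tsq := lt_of_le_of_ne hTsqnn (Ne.symm h0)
      have hTpos : 0 < T := Real.sqrt_pos.mpr hTsqpos
      set A := S.biUnion G with hA
      have hzA : ∑ i ∈ A, (z i) ^ 2 = Tsq := hsumA S _
      refine ⟨fun i => if i ∈ A then z i / T else 0, ?_, ?_, ?_⟩
      · have : (∑ i, (if i ∈ A then z i / T else 0) ^ 2)
            = (∑ i ∈ A, (z i) ^ 2) / T ^ 2 := by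
          have hpt : ∀ i, (if i ∈ A then z i / T else 0) ^ 2
              = if i ∈ A then (z i) ^ 2 / T ^ 2 else 0 := by
            intro i; split <;> simp [div_pow]
          simp_rw [hpt]
          rw [Finset.sum_ite_mem, Finset.univ_inter, Finset.sum_div]
        rw [this, hzA, Real.sq_sqrt hTsqnn, div_self h0]
      · have hsub : (Finset.univ.filter
            (fun g : Fin L => ∃ i ∈ G g, (if i ∈ A then z i / T else 0) ≠ 0)) ⊆ S := by
          intro g hg
          simp only [Finset.mem_filter] at hg
          obtain ⟨-, i, hiG, hi⟩ := hg
          have hiA : i ∈ A := by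
            by_contra hiA
            simp [hiA] at hi
          obtain ⟨g', hg'S, hig'⟩ := Finset.mem_biUnion.mp hiA
          rcases eq_or_ne g g' with rfl | hne
          · exact hg'S
          · exact absurd (Finset.disjoint_left.mp (hdisj g g' hne) hiG) (by simp [hig'])
        calc _ ≤ S.card := Finset.card_le_card hsub
        _ = k := hScard
      · have : (∑ i, z i * (if i ∈ A then z i / T else 0))
            = (∑ i ∈ A, (z i) ^ 2) / T := by
          have hpt : ∀ i, z i * (if i ∈ A then z i / T else 0)
              = if i ∈ A then (z i) ^ 2 / T else 0 := by
            intro i; split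
            · ring
            · simp
          simp_rw [hpt]
          rw [Finset.sum_ite_mem, Finset.univ_inter, Finset.sum_div]
        rw [this, hzA, hTdef, Real.div_sqrt]
  · -- lower bound
    rintro y ⟨u, hu1, hu2, rfl⟩
    rw [neg_le_neg_iff]
    obtain ⟨F', hFsub, hFcard⟩ := Finset.exists_superset_card_eq hu2
      (by simpa using hkL)
    set B := F'.biUnion G with hB
    have hstep : ∑ i, z i * u i = ∑ i ∈ B, z i * u i := by
      refine (Finset.sum_subset (Finset.subset_univ B) ?_).symm
      intro i _ hiB
      have hu0 : u i = 0 := by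
        by_contra hu0
        obtain ⟨g, hig⟩ := hcover i
        have hgF : g ∈ F' := hFsub (by
          simp only [Finset.mem_filter, Finset.mem_univ, true_and]
          exact ⟨i, hig, hu0⟩)
        exact hiB (Finset.mem_biUnion.mpr ⟨g, hgF, hig⟩)
      simp [hu0]
    rw [hstep]
    calc ∑ i ∈ B, z i * u i
        ≤ Real.sqrt (∑ i ∈ B, (z i) ^ 2) * Real.sqrt (∑ i ∈ B, (u i) ^ 2) :=
          Real.sum_mul_le_sqrt_mul_sqrt _ _ _
      _ ≤ T * 1 := by
          apply mul_le_mul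
          · rw [hsumA F']
            exact Real.sqrt_le_sqrt (hSmax F' hFcard)
          · rw [show (1 : ℝ) = Real.sqrt 1 by simp]
            apply Real.sqrt_le_sqrt
            calc ∑ i ∈ B, (u i) ^ 2 ≤ ∑ i, (u i) ^ 2 :=
                  Finset.sum_le_sum_of_subset_of_nonneg (Finset.subset_univ B)
                    (fun i _ _ => sq_nonneg _)
              _ ≤ 1 := hu1
          · exact Real.sqrt_nonneg _
          · exact hTnn
      _ = T := mul_one T
end

section
/- 0 is a minimizer of the function f(y) = λw‖y‖₂ − zᵀy + (ρ/2)‖y‖₂² if and only if ‖z‖₂ ≤ λw. -/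
open scoped RealInnerProductSpace
open Filter Topology

/-!
Testing `y = t • z` with `t ↓ 0` gives `f(t • z) = t‖z‖ (λw − ‖z‖ + (ρ/2) t ‖z‖) ≥ 0`, hence
`‖z‖ ≤ λw`. Conversely, Cauchy–Schwarz `⟪z, y⟫ ≤ ‖z‖‖y‖ ≤ λw‖y‖` makes `f ≥ 0 = f 0`.
-/

theorem le_of_forall_pos_le_add_mul {x y c : ℝ} (h : ∀ t > 0, x ≤ y + c * t) : x ≤ y := by
  have hlim : Tendsto (fun t => y + c * t) (𝓝[>] 0) (𝓝 y) := by
    have : Continuous fun t : ℝ => y + c * t := by fun_prop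
    simpa using (this.tendsto 0).mono_left nhdsWithin_le_nhds
  exact ge_of_tendsto hlim (eventually_nhdsWithin_of_forall h)

section InnerProductSpace

variable {E : Type*} [NormedAddCommGroup E] [InnerProductSpace ℝ E]

theorem norm_le_of_forall_nonneg_mul_norm_sub_inner_add {a c : ℝ} {z : E} (ha : 0 ≤ a)
    (h : ∀ y : E, 0 ≤ a * ‖y‖ - ⟪z, y⟫ + c * ‖y‖ ^ 2) : ‖z‖ ≤ a := by
  rcases eq_or_ne z 0 with rfl | hz0
  · simpa using ha
  have hz : 0 < ‖z‖ := norm_pos_iff.mpr hz0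
  refine le_of_forall_pos_le_add_mul (c := c * ‖z‖) fun t ht => ?_
  have hf : 0 ≤ t * ‖z‖ * (a - ‖z‖ + c * ‖z‖ * t) := by
    have := h (t • z)
    rw [norm_smul, Real.norm_of_nonneg ht.le, real_inner_smul_right,
      real_inner_self_eq_norm_sq] at this
    linarith
  linarith [(mul_nonneg_iff_of_pos_left (mul_pos ht hz)).mp hf]

theorem nonneg_mul_norm_sub_inner_add {a c : ℝ} {z : E} (hc : 0 ≤ c) (hz : ‖z‖ ≤ a) (y : E) :
    0 ≤ a * ‖y‖ - ⟪z, y⟫ + c * ‖y‖ ^ 2 := by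
  have hzy : ⟪z, y⟫ ≤ a * ‖y‖ :=
    (real_inner_le_norm z y).trans (mul_le_mul_of_nonneg_right hz (norm_nonneg y))
  have hquad : 0 ≤ c * ‖y‖ ^ 2 := by positivity
  linarith

end InnerProductSpace

/-- `0` minimizes `f(y) = λw‖y‖₂ − zᵀy + (ρ/2)‖y‖₂²` iff `‖z‖₂ ≤ λw`. -/
theorem zero_minimizer_iff (q : ℕ) (z : EuclideanSpace ℝ (Fin q))
    (lam w ρ : ℝ) (hlam : 0 < lam) (hw : 0 < w) (hρ : 0 < ρ) :
    (∀ y : EuclideanSpace ℝ (Fin q),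
        lam * w * ‖(0 : EuclideanSpace ℝ (Fin q))‖ - ⟪z, (0 : EuclideanSpace ℝ (Fin q))⟫
          + (ρ / 2) * ‖(0 : EuclideanSpace ℝ (Fin q))‖ ^ 2
        ≤ lam * w * ‖y‖ - ⟪z, y⟫ + (ρ / 2) * ‖y‖ ^ 2) ↔ ‖z‖ ≤ lam * w := by
  simp only [norm_zero, inner_zero_right, mul_zero, sub_zero, zero_add, ne_eq,
    OfNat.ofNat_ne_zero, not_false_eq_true, zero_pow]
  exact ⟨norm_le_of_forall_nonneg_mul_norm_sub_inner_add (by positivity),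
    nonneg_mul_norm_sub_inner_add (by positivity)⟩
end
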